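/- arXiv:2402.09462 — 5 statements merged into one kernel-verified Lean document; each statement's English description precedes it below -/
import Mathlib

section
/- Let m ∈ ℝ and σ > 0. Let μ be the Gaussian probability measure on ℝ with mean m and variance σ², and consider the product measure μ ⊗ μ (i.e., X and Y are i.i.d. N(m, σ²)). Define, for r > 0, f_R(r) = (1/(2σ²))·exp(−(2m² + r)/(2σ²))·I₀(m·√(2r)/σ²), and, for x² < r, f(x ∣ r) = exp(x·m/σ²)·cosh(m·√(r − x²)/σ²) / (π·√(r − x²)·I₀(m·√(2r)/σ²)). Then for every bounded measurable function g : ℝ → ℝ and every Borel set A ⊆ (0, ∞), ∫ g(x)·𝟙_A(x² + y²) d(μ ⊗ μ)(x, y) = ∫_{r ∈ A} ( ∫_{x ∈ (−√r, √r)} g(x)·f(x ∣ r) dx )·f_R(r) dr. (That is, f(· ∣ r) is the conditional density of X given X² + Y² = r.) -/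
/-!
Substitute `r = x² + y²` in the inner integral over `y`: on each half-line `y = ±√(r - x²)`, so
`(X, X² + Y²)` has the joint density `ρ(x) (ρ(√(r - x²)) + ρ(-√(r - x²))) / (2√(r - x²))` on
`{x² < r}`, and Fubini moves the integral over `r` outside. For the Gaussian density `ρ` the two
exponents add up to `-(2m² + r - 2m(x ± √(r - x²))) / (2σ²)`, so the joint density is exactly
`f(x ∣ r) f_R(r)`: the factor `I₀(m√(2r)/σ²)` enters `f_R` and cancels in `f(· ∣ r)`, and only its
positivity is used.
-/

open MeasureTheory ProbabilityTheory Real Set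

noncomputable def besselI0 (z : ℝ) : ℝ := (1 / π) * ∫ θ in (0:ℝ)..π, Real.exp (z * Real.cos θ)

section ChangeOfVariables

variable {E : Type*} [NormedAddCommGroup E] [NormedSpace ℝ E]

lemma image_sqrt_sub_Ioi (c : ℝ) : (fun r => √(r - c)) '' Ioi c = Ioi 0 := by
  ext y
  refine ⟨?_, fun hy => ⟨c + y ^ 2, ?_, ?_⟩⟩
  · rintro ⟨r, hr, rfl⟩
    exact sqrt_pos.2 (sub_pos.2 hr)
  · simpa using pow_pos (mem_Ioi.1 hy) 2
  · simp [sqrt_sq (le_of_lt hy)]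

lemma hasDerivWithinAt_sqrt_sub {c r : ℝ} (hr : r ∈ Ioi c) :
    HasDerivWithinAt (fun r => √(r - c)) (2 * √(r - c))⁻¹ (Ioi c) r := by
  simpa using (((hasDerivAt_id' r).sub_const c).sqrt (sub_pos.2 hr).ne').hasDerivWithinAt

lemma injOn_sqrt_sub (c : ℝ) : InjOn (fun r => √(r - c)) (Ioi c) := fun a ha b hb hab => by
  simpa using (sqrt_inj (sub_pos.2 ha).le (sub_pos.2 hb).le).1 hab

lemma integral_Ioi_eq_integral_Ioi_comp_sqrt_sub (c : ℝ) (H : ℝ → E) :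
    ∫ y in Ioi 0, H y = ∫ r in Ioi c, (2 * √(r - c))⁻¹ • H (√(r - c)) := by
  rw [← image_sqrt_sub_Ioi c, integral_image_eq_integral_abs_deriv_smul measurableSet_Ioi
    (fun r hr => hasDerivWithinAt_sqrt_sub hr) (injOn_sqrt_sub c)]
  refine setIntegral_congr_fun measurableSet_Ioi fun r _ => ?_
  rw [abs_of_nonneg (by positivity)]

lemma integrableOn_Ioi_iff_integrableOn_Ioi_comp_sqrt_sub (c : ℝ) (H : ℝ → E) :
    IntegrableOn H (Ioi 0) ↔
      IntegrableOn (fun r => (2 * √(r - c))⁻¹ • H (√(r - c))) (Ioi c) := by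
  rw [← image_sqrt_sub_Ioi c, integrableOn_image_iff_integrableOn_abs_deriv_smul
    measurableSet_Ioi (fun r hr => hasDerivWithinAt_sqrt_sub hr) (injOn_sqrt_sub c)]
  refine integrableOn_congr_fun (fun r _ => ?_) measurableSet_Ioi
  rw [abs_of_nonneg (by positivity)]

lemma integral_eq_integral_Ioi_add_comp_neg {h : ℝ → E} (hh : Integrable h) :
    ∫ y, h y = ∫ y in Ioi 0, (h y + h (-y)) := by
  rw [← intervalIntegral.integral_Iic_add_Ioi hh.integrableOn hh.integrableOn,
    ← integral_comp_neg_Ioi, neg_zero, ← integral_add hh.comp_neg.integrableOn hh.integrableOn]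
  congr 1 with y
  exact add_comm _ _

end ChangeOfVariables

/-- The density of `c + Y²` when `Y` has density `h`. -/
noncomputable def addSqDensity (h : ℝ → ℝ) (c r : ℝ) : ℝ :=
  (Ioi c).indicator (fun r => (2 * √(r - c))⁻¹ * (h (√(r - c)) + h (-√(r - c)))) r

section AddSqDensity

variable {h : ℝ → ℝ}

lemma addSqDensity_nonneg (hh : 0 ≤ h) (c r : ℝ) : 0 ≤ addSqDensity h c r :=
  indicator_nonneg (fun _ _ => mul_nonneg (by positivity) (add_nonneg (hh _) (hh _))) r

lemma measurable_uncurry_addSqDensity (hh : Measurable h) :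
    Measurable (Function.uncurry (addSqDensity h)) := by
  simp only [Function.uncurry_def, addSqDensity, indicator_apply, mem_Ioi]
  exact Measurable.ite (measurableSet_lt measurable_fst measurable_snd)
    (by fun_prop) measurable_const

variable {E : Type*} [NormedAddCommGroup E] [NormedSpace ℝ E]

theorem integral_smul_comp_add_sq (c : ℝ) {F : ℝ → E}
    (hF : Integrable fun y => h y • F (c + y ^ 2)) :
    ∫ y, h y • F (c + y ^ 2) = ∫ r, addSqDensity h c r • F r := by
  simp_rw [addSqDensity, ← indicator_smul_apply_left]
  rw [integral_indicator measurableSet_Ioi, integral_eq_integral_Ioi_add_comp_neg hF]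
  simp_rw [neg_sq, ← add_smul]
  rw [integral_Ioi_eq_integral_Ioi_comp_sqrt_sub c]
  refine setIntegral_congr_fun measurableSet_Ioi fun r hr => ?_
  rw [sq_sqrt (sub_pos.2 hr).le, add_sub_cancel, smul_smul]

lemma integrable_addSqDensity (hh : Integrable h) (c : ℝ) : Integrable (addSqDensity h c) := by
  refine (integrable_indicator_iff measurableSet_Ioi).2 ?_
  simpa using (integrableOn_Ioi_iff_integrableOn_Ioi_comp_sqrt_sub c
    fun y => h y + h (-y)).1 (hh.add hh.comp_neg).integrableOn

lemma integral_addSqDensity (hh : Integrable h) (c : ℝ) : ∫ r, addSqDensity h c r = ∫ y, h y := by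
  simpa using (integral_smul_comp_add_sq c (F := fun _ => (1 : ℝ)) (by simpa using hh)).symm

end AddSqDensity

section Fubini

variable {ρ₁ ρ₂ : ℝ → ℝ}

lemma integrable_mul_addSqDensity (hρ₁ : Integrable ρ₁) (hρ₂ : Integrable ρ₂)
    (hρ₂m : Measurable ρ₂) (hρ₂0 : 0 ≤ ρ₂) :
    Integrable (fun p : ℝ × ℝ => ρ₁ p.1 * addSqDensity ρ₂ (p.1 ^ 2) p.2)
      (volume.prod volume) := by
  have hmeas : AEStronglyMeasurable (fun p : ℝ × ℝ => ρ₁ p.1 * addSqDensity ρ₂ (p.1 ^ 2) p.2)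
      (volume.prod volume) :=
    hρ₁.aestronglyMeasurable.comp_fst.mul
      ((measurable_uncurry_addSqDensity hρ₂m).comp
        ((measurable_fst.pow_const 2).prodMk measurable_snd)).aestronglyMeasurable
  refine (integrable_prod_iff hmeas).2
    ⟨ae_of_all _ fun x => (integrable_addSqDensity hρ₂ (x ^ 2)).const_mul (ρ₁ x), ?_⟩
  have hslice : ∀ x, ∫ r, ‖ρ₁ x * addSqDensity ρ₂ (x ^ 2) r‖ = ‖ρ₁ x‖ * ∫ y, ρ₂ y := fun x => by
    simp_rw [norm_mul, Real.norm_of_nonneg (addSqDensity_nonneg hρ₂0 _ _)]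
    rw [integral_const_mul, integral_addSqDensity hρ₂]
  simpa only [hslice] using hρ₁.norm.mul_const _

variable {E : Type*} [NormedAddCommGroup E] [NormedSpace ℝ E]

theorem integral_smul_integral_smul_comp_sq_add_sq (hρ₁ : Integrable ρ₁) (hρ₂ : Integrable ρ₂)
    (hρ₂m : Measurable ρ₂) (hρ₂0 : 0 ≤ ρ₂) {Φ : ℝ → ℝ → E}
    (hΦ : StronglyMeasurable (Function.uncurry Φ)) {C : ℝ} (hΦC : ∀ x r, ‖Φ x r‖ ≤ C) :
    ∫ x, ρ₁ x • ∫ y, ρ₂ y • Φ x (x ^ 2 + y ^ 2) =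
      ∫ r, ∫ x, (ρ₁ x * addSqDensity ρ₂ (x ^ 2) r) • Φ x r := by
  have hinner : ∀ x, ∫ y, ρ₂ y • Φ x (x ^ 2 + y ^ 2) = ∫ r, addSqDensity ρ₂ (x ^ 2) r • Φ x r :=
    fun x => integral_smul_comp_add_sq _ <| hρ₂.smul_bdd C
      (hΦ.comp_measurable (measurable_const.prodMk (measurable_const.add
        (measurable_id.pow_const 2)))).aestronglyMeasurable (ae_of_all _ fun _ => hΦC _ _)
  have hjoint : Integrable (Function.uncurry fun x r => (ρ₁ x * addSqDensity ρ₂ (x ^ 2) r) • Φ x r)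
      (volume.prod volume) :=
    (integrable_mul_addSqDensity hρ₁ hρ₂ hρ₂m hρ₂0).smul_bdd C hΦ.aestronglyMeasurable
      (ae_of_all _ fun p => hΦC p.1 p.2)
  simp_rw [hinner, ← integral_smul, smul_smul]
  exact integral_integral_swap hjoint

end Fubini

lemma besselI0_pos (z : ℝ) : 0 < besselI0 z := by
  have hcont : Continuous fun θ => exp (z * cos θ) := by fun_prop
  have : 0 < ∫ θ in (0:ℝ)..π, exp (z * cos θ) :=
    intervalIntegral.intervalIntegral_pos_of_pos_on (hcont.intervalIntegrable 0 π)
      (fun _ _ => exp_pos _) pi_pos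
  unfold besselI0
  positivity

-- `f_R` and `f(· ∣ r)` of the statement.
noncomputable def sumSqDensity (m σ r : ℝ) : ℝ :=
  1 / (2 * σ ^ 2) * exp (-(2 * m ^ 2 + r) / (2 * σ ^ 2)) * besselI0 (m * √(2 * r) / σ ^ 2)

noncomputable def condDensityGivenSumSq (m σ x r : ℝ) : ℝ :=
  exp (x * m / σ ^ 2) * cosh (m * √(r - x ^ 2) / σ ^ 2) /
    (π * √(r - x ^ 2) * besselI0 (m * √(2 * r) / σ ^ 2))

section Gaussian

variable (m : ℝ)

lemma gaussianPDFReal_mul_gaussianPDFReal {v : NNReal} (hv : v ≠ 0) {x y r : ℝ}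
    (hr : x ^ 2 + y ^ 2 = r) :
    gaussianPDFReal m v x * gaussianPDFReal m v y =
      (2 * π * v)⁻¹ * exp (-(2 * m ^ 2 + r) / (2 * v)) * (exp (x * m / v) * exp (m * y / v)) := by
  have hv' : (v : ℝ) ≠ 0 := NNReal.coe_ne_zero.2 hv
  simp only [gaussianPDFReal]
  rw [mul_mul_mul_comm, ← mul_inv, mul_self_sqrt (by positivity),
    mul_assoc _ (exp _), ← exp_add, ← exp_add, ← exp_add]
  congr 2
  field_simp
  linear_combination -hr

lemma gaussianPDFReal_mul_addSqDensity {σ : ℝ} (hσ : σ ≠ 0) {v : NNReal} (hv2 : (v : ℝ) = σ ^ 2)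
    (x r : ℝ) :
    gaussianPDFReal m v x * addSqDensity (gaussianPDFReal m v) (x ^ 2) r =
      (Ioo (-√r) √r).indicator (fun x => condDensityGivenSumSq m σ x r * sumSqDensity m σ r) x := by
  unfold addSqDensity
  by_cases hx : x ^ 2 < r
  swap
  · rw [indicator_of_notMem (s := Ioi _) hx, indicator_of_notMem (s := Ioo _ _) (mt sq_lt.2 hx),
      mul_zero]
  rw [indicator_of_mem (s := Ioi _) hx, indicator_of_mem (s := Ioo _ _) (sq_lt.1 hx)]
  have hs : x ^ 2 + √(r - x ^ 2) ^ 2 = r := by rw [sq_sqrt (sub_pos.2 hx).le]; ring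
  have hs' : x ^ 2 + (-√(r - x ^ 2)) ^ 2 = r := by rw [neg_sq, hs]
  have hs0 : 0 < √(r - x ^ 2) := sqrt_pos.2 (sub_pos.2 hx)
  have hB := besselI0_pos (m * √(2 * r) / σ ^ 2)
  have hv : v ≠ 0 := by simpa [← NNReal.coe_ne_zero, hv2] using hσ
  rw [mul_left_comm, mul_add, gaussianPDFReal_mul_gaussianPDFReal m hv hs,
    gaussianPDFReal_mul_gaussianPDFReal m hv hs', condDensityGivenSumSq, sumSqDensity, cosh_eq,
    mul_neg, neg_div _ (m * _), hv2]
  field_simp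

variable {E : Type*} [NormedAddCommGroup E] [NormedSpace ℝ E]

theorem integral_gaussianReal_prod_comp_sq_add_sq {σ : ℝ} (hσ : σ ≠ 0) {v : NNReal}
    (hv2 : (v : ℝ) = σ ^ 2) {Φ : ℝ → ℝ → E} (hΦ : StronglyMeasurable (Function.uncurry Φ)) {C : ℝ}
    (hΦC : ∀ x r, ‖Φ x r‖ ≤ C) :
    ∫ p : ℝ × ℝ, Φ p.1 (p.1 ^ 2 + p.2 ^ 2) ∂((gaussianReal m v).prod (gaussianReal m v)) =
      ∫ r, ∫ x in Ioo (-√r) √r, (condDensityGivenSumSq m σ x r * sumSqDensity m σ r) • Φ x r := by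
  have hv : v ≠ 0 := by simpa [← NNReal.coe_ne_zero, hv2] using hσ
  have hint : Integrable (fun p : ℝ × ℝ => Φ p.1 (p.1 ^ 2 + p.2 ^ 2))
      ((gaussianReal m v).prod (gaussianReal m v)) :=
    .of_bound (hΦ.comp_measurable (measurable_fst.prodMk (by fun_prop :
      Measurable fun p : ℝ × ℝ => p.1 ^ 2 + p.2 ^ 2))).aestronglyMeasurable C
      (ae_of_all _ fun p => hΦC _ _)
  rw [integral_prod _ hint]
  simp only [integral_gaussianReal_eq_integral_smul hv]
  rw [integral_smul_integral_smul_comp_sq_add_sq (integrable_gaussianPDFReal m _)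
    (integrable_gaussianPDFReal m _) (measurable_gaussianPDFReal m _) (gaussianPDFReal_nonneg m _)
    hΦ hΦC]
  congr 1 with r
  simp_rw [gaussianPDFReal_mul_addSqDensity m hσ hv2, ← integral_indicator measurableSet_Ioo,
    indicator_smul_apply_left]

end Gaussian

theorem conditional_density_rice_general
    (m σ : ℝ) (hσ : 0 < σ)
    (μ : Measure ℝ) (hμ : μ = gaussianReal m ⟨σ ^ 2, sq_nonneg σ⟩)
    (fR : ℝ → ℝ)
    (hfR : ∀ r : ℝ, fR r =
      (1 / (2 * σ ^ 2)) * Real.exp (-(2 * m ^ 2 + r) / (2 * σ ^ 2)) *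
        besselI0 (m * Real.sqrt (2 * r) / σ ^ 2))
    (f : ℝ → ℝ → ℝ)
    (hf : ∀ x r : ℝ, f x r =
      Real.exp (x * m / σ ^ 2) * Real.cosh (m * Real.sqrt (r - x ^ 2) / σ ^ 2) /
        (π * Real.sqrt (r - x ^ 2) * besselI0 (m * Real.sqrt (2 * r) / σ ^ 2)))
    (g : ℝ → ℝ) (hg : Measurable g) (hgbdd : ∃ C : ℝ, ∀ x, |g x| ≤ C)
    (A : Set ℝ) (hA : MeasurableSet A) :
    ∫ p : ℝ × ℝ, g p.1 * Set.indicator A (fun _ => (1:ℝ)) (p.1 ^ 2 + p.2 ^ 2) ∂(μ.prod μ) =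
      ∫ r in A, (∫ x in Set.Ioo (-Real.sqrt r) (Real.sqrt r), g x * f x r) * fR r := by
  obtain ⟨C, hC⟩ := hgbdd
  obtain rfl : fR = sumSqDensity m σ := funext hfR
  obtain rfl : f = condDensityGivenSumSq m σ := funext₂ hf
  subst hμ
  set v : NNReal := ⟨σ ^ 2, sq_nonneg σ⟩
  have hΦ : Measurable (Function.uncurry fun x r => g x * A.indicator (fun _ => (1 : ℝ)) r) :=
    (hg.comp measurable_fst).mul ((measurable_const.indicator hA).comp measurable_snd)
  have hΦC : ∀ x r, ‖g x * A.indicator (fun _ => (1 : ℝ)) r‖ ≤ C := fun x r => by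
    simpa [norm_mul] using mul_le_mul (hC x) (norm_indicator_le_norm_self (fun _ => (1 : ℝ)) r)
      (norm_nonneg _) ((abs_nonneg _).trans (hC x))
  rw [integral_gaussianReal_prod_comp_sq_add_sq m hσ.ne' (v := v) rfl hΦ.stronglyMeasurable hΦC,
    ← integral_indicator hA]
  congr 1 with r
  by_cases hr : r ∈ A
  · simp only [indicator_of_mem hr, mul_one, smul_eq_mul, ← integral_mul_const]
    congr 1 with x
    ring
  · simp [hr]

theorem conditional_density_rice
    (m σ : ℝ) (hσ : 0 < σ)
    (μ : Measure ℝ) (hμ : μ = gaussianReal m ⟨σ ^ 2, sq_nonneg σ⟩)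
    (fR : ℝ → ℝ)
    (hfR : ∀ r : ℝ, fR r =
      (1 / (2 * σ ^ 2)) * Real.exp (-(2 * m ^ 2 + r) / (2 * σ ^ 2)) *
        besselI0 (m * Real.sqrt (2 * r) / σ ^ 2))
    (f : ℝ → ℝ → ℝ)
    (hf : ∀ x r : ℝ, f x r =
      Real.exp (x * m / σ ^ 2) * Real.cosh (m * Real.sqrt (r - x ^ 2) / σ ^ 2) /
        (π * Real.sqrt (r - x ^ 2) * besselI0 (m * Real.sqrt (2 * r) / σ ^ 2)))
    (g : ℝ → ℝ) (hg : Measurable g) (hgbdd : ∃ C : ℝ, ∀ x, |g x| ≤ C)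
    (A : Set ℝ) (hA : MeasurableSet A) (hAsub : A ⊆ Set.Ioi (0:ℝ)) :
    ∫ p : ℝ × ℝ, g p.1 * Set.indicator A (fun _ => (1:ℝ)) (p.1 ^ 2 + p.2 ^ 2) ∂(μ.prod μ) =
      ∫ r in A, (∫ x in Set.Ioo (-Real.sqrt r) (Real.sqrt r), g x * f x r) * fR r :=
  conditional_density_rice_general m σ hσ μ hμ fR hfR f hf g hg hgbdd A hA
end

section
/- Let d ≥ 1, let D ⊆ ℝ × (Fin d → ℝ) be an open set, let a : ℝ × (Fin d → ℝ) → (Fin d → ℝ) and b : ℝ × (Fin d → ℝ) → Matrix (Fin d) (Fin d) ℝ be arbitrary coefficient functions, and let v : ℝ × (Fin d → ℝ) → ℝ be twice continuously differentiable on D with v(t, x) > 0 for all (t, x) ∈ D. Set u = v². Then v satisfies the linear Kolmogorov backward equation ∂_t v + Σ_{i} a_i·∂_{x_i} v + (1/2)·Σ_{i,j,k} b_{ik}·b_{jk}·∂²_{x_i x_j} v = 0 at every point of D if and only if u satisfies the nonlinear equation ∂_t u + Σ_{i} a_i·∂_{x_i} u + (1/2)·Σ_{i,j,k} b_{ik}·b_{jk}·∂²_{x_i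 x_j} u − (1/(4u))·Σ_{k} ( Σ_{j} b_{jk}·∂_{x_j} u )² = 0 at every point of D. -/
/-!
Write `L = ∂_t + Σ a_i ∂_i + ½ Σ (b bᵀ)_{ij} ∂_i ∂_j` and `Γ(f, g) = ⟨bᵀ∇f, bᵀ∇g⟩` for its carré du
champ. The first-order part of `L` is a derivation, so the product rule gives
`L (f g) = f L g + g L f + Γ(f, g)`. For `u = v²` this reads `L u = 2 v L v + Γ(v, v)`, while
`|bᵀ∇u|² = 4 v² Γ(v, v) = 4 u Γ(v, v)`; hence the left-hand side of the nonlinear equation is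
`2 v L v`, and it vanishes exactly when `L v` does because `v > 0`.
-/

open Real

/-- Partial derivative in the first (time) variable. -/
noncomputable def ptderiv {d : ℕ} (v : ℝ × (Fin d → ℝ) → ℝ) (p : ℝ × (Fin d → ℝ)) : ℝ :=
  deriv (fun s => v (s, p.2)) p.1

/-- Partial derivative in the i-th spatial coordinate. -/
noncomputable def pxderiv {d : ℕ} (i : Fin d) (v : ℝ × (Fin d → ℝ) → ℝ)
    (p : ℝ × (Fin d → ℝ)) : ℝ :=
  deriv (fun s => v (p.1, Function.update p.2 i s)) (p.2 i)

open Filter Topology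

noncomputable def kolmogorovOp {d : ℕ} (a : ℝ × (Fin d → ℝ) → Fin d → ℝ)
    (b : ℝ × (Fin d → ℝ) → Matrix (Fin d) (Fin d) ℝ) (v : ℝ × (Fin d → ℝ) → ℝ)
    (p : ℝ × (Fin d → ℝ)) : ℝ :=
  ptderiv v p + (∑ i, a p i * pxderiv i v p) +
    (1 / 2) * ∑ i, ∑ j, ∑ k, b p i k * b p j k * pxderiv i (pxderiv j v) p

noncomputable def carreDuChamp {d : ℕ} (b : ℝ × (Fin d → ℝ) → Matrix (Fin d) (Fin d) ℝ)
    (f g : ℝ × (Fin d → ℝ) → ℝ) (p : ℝ × (Fin d → ℝ)) : ℝ :=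
  ∑ k, (∑ i, b p i k * pxderiv i f p) * (∑ j, b p j k * pxderiv j g p)

theorem Matrix.sum_mul_sum_eq_sum_sum_sum {ι κ R : Type*} [Fintype ι] [Fintype κ] [CommSemiring R]
    (B : Matrix ι κ R) (x y : ι → R) :
    ∑ k, (∑ i, B i k * x i) * (∑ j, B j k * y j) = ∑ i, ∑ j, ∑ k, B i k * B j k * (x i * y j) := by
  simp only [Finset.sum_mul_sum]
  rw [Finset.sum_comm]
  refine Finset.sum_congr rfl fun i _ => ?_
  rw [Finset.sum_comm]
  exact Finset.sum_congr rfl fun j _ => Finset.sum_congr rfl fun k _ => by ring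

section PartialDerivatives

variable {d : ℕ} {v f g : ℝ × (Fin d → ℝ) → ℝ} {p : ℝ × (Fin d → ℝ)}

theorem ptderiv_eq_fderiv (hv : DifferentiableAt ℝ v p) :
    ptderiv v p = fderiv ℝ v p (1, 0) :=
  (hv.hasFDerivAt.comp_hasDerivAt _ ((hasDerivAt_id p.1).prodMk (hasDerivAt_const _ _))).deriv

theorem pxderiv_eq_fderiv (hv : DifferentiableAt ℝ v p) (i : Fin d) :
    pxderiv i v p = fderiv ℝ v p (0, Pi.single i 1) := by
  have hv' : DifferentiableAt ℝ v (p.1, Function.update p.2 i (p.2 i)) := by simpa using hv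
  have h := hv'.hasFDerivAt.comp_hasDerivAt _
    ((hasDerivAt_const _ p.1).prodMk (hasDerivAt_update p.2 i (p.2 i)))
  rw [pxderiv]
  simpa [Function.comp_def] using h.deriv

theorem ptderiv_mul (hf : DifferentiableAt ℝ f p) (hg : DifferentiableAt ℝ g p) :
    ptderiv (fun q => f q * g q) p = ptderiv f p * g p + f p * ptderiv g p := by
  rw [ptderiv_eq_fderiv (hf.fun_mul hg), fderiv_fun_mul hf hg, ptderiv_eq_fderiv hf,
    ptderiv_eq_fderiv hg]
  simp only [add_apply, smul_apply, smul_eq_mul]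
  ring

theorem pxderiv_mul (hf : DifferentiableAt ℝ f p) (hg : DifferentiableAt ℝ g p) (i : Fin d) :
    pxderiv i (fun q => f q * g q) p = pxderiv i f p * g p + f p * pxderiv i g p := by
  rw [pxderiv_eq_fderiv (hf.fun_mul hg), fderiv_fun_mul hf hg, pxderiv_eq_fderiv hf,
    pxderiv_eq_fderiv hg]
  simp only [add_apply, smul_apply, smul_eq_mul]
  ring

theorem pxderiv_add (hf : DifferentiableAt ℝ f p) (hg : DifferentiableAt ℝ g p) (i : Fin d) :
    pxderiv i (fun q => f q + g q) p = pxderiv i f p + pxderiv i g p := by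
  rw [pxderiv_eq_fderiv (hf.fun_add hg), fderiv_fun_add hf hg, pxderiv_eq_fderiv hf,
    pxderiv_eq_fderiv hg]
  rfl

theorem Filter.EventuallyEq.pxderiv_eq (h : f =ᶠ[𝓝 p] g) (i : Fin d) :
    pxderiv i f p = pxderiv i g p := by
  have hslice : Tendsto (fun s => (p.1, Function.update p.2 i s)) (𝓝 (p.2 i)) (𝓝 p) :=
    (continuous_const.prodMk (continuous_const.update i continuous_id)).tendsto' _ _ (by simp)
  exact (h.comp_tendsto hslice).deriv_eq

theorem ContDiffAt.differentiableAt_pxderiv (hv : ContDiffAt ℝ 2 v p) (i : Fin d) :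
    DifferentiableAt ℝ (pxderiv i v) p := by
  have hfd : DifferentiableAt ℝ (fun q => fderiv ℝ v q (0, Pi.single i 1)) p :=
    ((hv.fderiv_right (m := 1) le_rfl).differentiableAt one_ne_zero).clm_apply
      (differentiableAt_const _)
  refine hfd.congr_of_eventuallyEq ?_
  filter_upwards [hv.eventually (by simp)] with q hq
  exact pxderiv_eq_fderiv (hq.differentiableAt two_ne_zero) i

theorem pxderiv_pxderiv_mul (hf : ContDiffAt ℝ 2 f p) (hg : ContDiffAt ℝ 2 g p) (i j : Fin d) :
    pxderiv i (pxderiv j (fun q => f q * g q)) p =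
      pxderiv i (pxderiv j f) p * g p + pxderiv j f p * pxderiv i g p +
        pxderiv i f p * pxderiv j g p + f p * pxderiv i (pxderiv j g) p := by
  have hfirst : pxderiv j (fun q => f q * g q) =ᶠ[𝓝 p]
      fun q => pxderiv j f q * g q + f q * pxderiv j g q := by
    filter_upwards [hf.eventually (by simp), hg.eventually (by simp)] with q hfq hgq
    exact pxderiv_mul (hfq.differentiableAt two_ne_zero) (hgq.differentiableAt two_ne_zero) j
  have hf1 := hf.differentiableAt two_ne_zero
  have hg1 := hg.differentiableAt two_ne_zero
  have hfj := hf.differentiableAt_pxderiv j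
  have hgj := hg.differentiableAt_pxderiv j
  rw [hfirst.pxderiv_eq, pxderiv_add (hfj.fun_mul hg1) (hf1.fun_mul hgj), pxderiv_mul hfj hg1,
    pxderiv_mul hf1 hgj]
  ring

end PartialDerivatives

section Operators

variable {d : ℕ} {a : ℝ × (Fin d → ℝ) → Fin d → ℝ}
  {b : ℝ × (Fin d → ℝ) → Matrix (Fin d) (Fin d) ℝ} {v f g : ℝ × (Fin d → ℝ) → ℝ}
  {p : ℝ × (Fin d → ℝ)}

theorem carreDuChamp_comm : carreDuChamp b f g p = carreDuChamp b g f p :=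
  Finset.sum_congr rfl fun _ _ => mul_comm _ _

theorem kolmogorovOp_mul (hf : ContDiffAt ℝ 2 f p) (hg : ContDiffAt ℝ 2 g p) :
    kolmogorovOp a b (fun q => f q * g q) p =
      f p * kolmogorovOp a b g p + g p * kolmogorovOp a b f p + carreDuChamp b f g p := by
  have hf1 := hf.differentiableAt two_ne_zero
  have hg1 := hg.differentiableAt two_ne_zero
  have hdrift : ∑ i, a p i * pxderiv i (fun q => f q * g q) p =
      f p * ∑ i, a p i * pxderiv i g p + g p * ∑ i, a p i * pxderiv i f p := by
    simp only [pxderiv_mul hf1 hg1, Finset.mul_sum, ← Finset.sum_add_distrib]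
    exact Finset.sum_congr rfl fun i _ => by ring
  have hdiffusion :
      ∑ i, ∑ j, ∑ k, b p i k * b p j k * pxderiv i (pxderiv j fun q => f q * g q) p =
        f p * (∑ i, ∑ j, ∑ k, b p i k * b p j k * pxderiv i (pxderiv j g) p) +
          g p * (∑ i, ∑ j, ∑ k, b p i k * b p j k * pxderiv i (pxderiv j f) p) +
          (carreDuChamp b f g p + carreDuChamp b g f p) := by
    rw [carreDuChamp, carreDuChamp, Matrix.sum_mul_sum_eq_sum_sum_sum,
      Matrix.sum_mul_sum_eq_sum_sum_sum]
    simp only [pxderiv_pxderiv_mul hf hg, Finset.mul_sum, ← Finset.sum_add_distrib]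
    exact Finset.sum_congr rfl fun i _ => Finset.sum_congr rfl fun j _ =>
      Finset.sum_congr rfl fun k _ => by ring
  rw [kolmogorovOp, kolmogorovOp, kolmogorovOp, ptderiv_mul hf1 hg1, hdrift, hdiffusion,
    carreDuChamp_comm (f := g)]
  ring

theorem kolmogorovOp_sq_sub (hv : ContDiffAt ℝ 2 v p) (hv0 : v p ≠ 0) :
    kolmogorovOp a b (fun q => v q ^ 2) p -
        1 / (4 * v p ^ 2) * ∑ k, (∑ j, b p j k * pxderiv j (fun q => v q ^ 2) p) ^ 2 =
      2 * v p * kolmogorovOp a b v p := by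
  have hv1 := hv.differentiableAt two_ne_zero
  have hsq : (fun q => v q ^ 2) = fun q => v q * v q := funext fun q => sq (v q)
  have hgrad : ∀ k, ∑ j, b p j k * pxderiv j (fun q => v q * v q) p =
      2 * v p * ∑ j, b p j k * pxderiv j v p := by
    intro k
    simp only [pxderiv_mul hv1 hv1, Finset.mul_sum]
    exact Finset.sum_congr rfl fun j _ => by ring
  have hgrad_sq : ∑ k, (∑ j, b p j k * pxderiv j (fun q => v q * v q) p) ^ 2 =
      4 * v p ^ 2 * carreDuChamp b v v p := by
    rw [carreDuChamp, Finset.mul_sum]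
    exact Finset.sum_congr rfl fun k _ => by rw [hgrad]; ring
  rw [hsq, kolmogorovOp_mul hv hv, hgrad_sq]
  field_simp
  ring

end Operators

theorem hjb_iff_kbe_general
    {d : ℕ}
    (D : Set (ℝ × (Fin d → ℝ))) (hD : IsOpen D)
    (a : ℝ × (Fin d → ℝ) → Fin d → ℝ)
    (b : ℝ × (Fin d → ℝ) → Matrix (Fin d) (Fin d) ℝ)
    (v : ℝ × (Fin d → ℝ) → ℝ)
    (hv : ContDiffOn ℝ 2 v D)
    (hvpos : ∀ p ∈ D, 0 < v p)
    (u : ℝ × (Fin d → ℝ) → ℝ) (hu : u = fun p => (v p) ^ 2) :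
    (∀ p ∈ D,
        ptderiv v p + (∑ i, a p i * pxderiv i v p) +
          (1 / 2) * ∑ i, ∑ j, ∑ k, b p i k * b p j k * pxderiv i (pxderiv j v) p = 0) ↔
    (∀ p ∈ D,
        ptderiv u p + (∑ i, a p i * pxderiv i u p) +
          (1 / 2) * (∑ i, ∑ j, ∑ k, b p i k * b p j k * pxderiv i (pxderiv j u) p) -
          (1 / (4 * u p)) * ∑ k, (∑ j, b p j k * pxderiv j u p) ^ 2 = 0) := by
  subst hu
  refine forall₂_congr fun p hp => ?_
  have hv0 : v p ≠ 0 := (hvpos p hp).ne'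
  rw [← kolmogorovOp, ← kolmogorovOp, kolmogorovOp_sq_sub (hv.contDiffAt (hD.mem_nhds hp)) hv0,
    mul_eq_zero, or_iff_right (mul_ne_zero two_ne_zero hv0)]

theorem hjb_iff_kbe
    {d : ℕ} (hd : 1 ≤ d)
    (D : Set (ℝ × (Fin d → ℝ))) (hD : IsOpen D)
    (a : ℝ × (Fin d → ℝ) → Fin d → ℝ)
    (b : ℝ × (Fin d → ℝ) → Matrix (Fin d) (Fin d) ℝ)
    (v : ℝ × (Fin d → ℝ) → ℝ)
    (hv : ContDiffOn ℝ 2 v D)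
    (hvpos : ∀ p ∈ D, 0 < v p)
    (u : ℝ × (Fin d → ℝ) → ℝ) (hu : u = fun p => (v p) ^ 2) :
    (∀ p ∈ D,
        ptderiv v p + (∑ i, a p i * pxderiv i v p) +
          (1 / 2) * ∑ i, ∑ j, ∑ k, b p i k * b p j k * pxderiv i (pxderiv j v) p = 0) ↔
    (∀ p ∈ D,
        ptderiv u p + (∑ i, a p i * pxderiv i u p) +
          (1 / 2) * (∑ i, ∑ j, ∑ k, b p i k * b p j k * pxderiv i (pxderiv j u) p) -
          (1 / (4 * u p)) * ∑ k, (∑ j, b p j k * pxderiv j u p) ^ 2 = 0) :=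
  hjb_iff_kbe_general D hD a b v hv hvpos u hu
end

section
/- Let σ₁ > 0 and σ₂ > 0, and let μ₁, μ₂ be the Gaussian probability measures on ℝ with mean 0 and variances σ₁², σ₂² respectively. Then the pushforward of μ₁ ⊗ μ₂ under the map (x, y) ↦ x² + y² is absolutely continuous with respect to Lebesgue measure, with density r ↦ (1/(2σ₁σ₂))·exp(−r(σ₁² + σ₂²)/(4σ₁²σ₂²))·I₀(r(σ₁² − σ₂²)/(4σ₁²σ₂²)) for r > 0 and density 0 for r ≤ 0. -/
/-!
In polar coordinates `(x, y) = (r cos θ, r sin θ)` the product of the two Gaussian densities is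
`(2π σ₁ σ₂)⁻¹ exp (a cos² θ + b sin² θ)` with `a = -r² / (2σ₁²)`, `b = -r² / (2σ₂²)`. Since
`a cos² θ + b sin² θ = (a + b) / 2 + (a - b) / 2 · cos 2θ`, the angular integral is
`2π exp ((a + b) / 2) I₀ ((a - b) / 2)`, and the substitution `s = r²`, `ds = 2r dr`, turns the
radial integral into an integral against the stated density in `s`.
-/

open MeasureTheory ProbabilityTheory Real Set
open scoped ENNReal NNReal

lemma continuous_besselI0 : Continuous besselI0 := by
  unfold besselI0
  fun_prop

lemma integral_exp_mul_cos_zero_two_pi (z : ℝ) :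
    ∫ u in (0:ℝ)..2 * π, rexp (z * cos u) = 2 * π * besselI0 z := by
  have hcont : Continuous fun u => rexp (z * cos u) := by fun_prop
  have hsecond : ∫ u in π..2 * π, rexp (z * cos u) = ∫ u in (0:ℝ)..π, rexp (z * cos u) := by
    have h := intervalIntegral.integral_comp_sub_left (fun u => rexp (z * cos u))
      (a := 0) (b := π) (2 * π)
    simp only [cos_two_pi_sub, sub_zero, show 2 * π - π = π by ring] at h
    exact h.symm
  rw [← intervalIntegral.integral_add_adjacent_intervals (b := π) (hcont.intervalIntegrable _ _)
    (hcont.intervalIntegrable _ _), hsecond, besselI0]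
  field_simp
  ring

lemma integral_exp_mul_cos_two_mul (z : ℝ) :
    ∫ θ in (-π)..π, rexp (z * cos (2 * θ)) = 2 * π * besselI0 z := by
  have hcont : Continuous fun θ => rexp (z * cos (2 * θ)) := by fun_prop
  have hper : Function.Periodic (fun θ => rexp (z * cos (2 * θ))) π := fun θ => by
    simp [mul_add, cos_add_two_pi]
  have hhalf :
      ∫ θ in (-π)..0, rexp (z * cos (2 * θ)) = ∫ θ in (0:ℝ)..π, rexp (z * cos (2 * θ)) := by
    simpa using hper.intervalIntegral_add_eq (-π) 0
  rw [← intervalIntegral.integral_add_adjacent_intervals (b := 0) (hcont.intervalIntegrable _ _)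
    (hcont.intervalIntegrable _ _), hhalf,
    intervalIntegral.integral_comp_mul_left (fun u => rexp (z * cos u)) two_ne_zero,
    mul_zero, integral_exp_mul_cos_zero_two_pi]
  simp only [smul_eq_mul]
  ring

lemma integral_exp_mul_cos_sq_add_mul_sin_sq (a b : ℝ) :
    ∫ θ in (-π)..π, rexp (a * cos θ ^ 2 + b * sin θ ^ 2)
      = 2 * π * rexp ((a + b) / 2) * besselI0 ((a - b) / 2) := by
  have hpt (θ : ℝ) : rexp (a * cos θ ^ 2 + b * sin θ ^ 2)
      = rexp ((a + b) / 2) * rexp ((a - b) / 2 * cos (2 * θ)) := by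
    rw [← exp_add, cos_two_mul]
    congr 1
    linear_combination b * sin_sq_add_cos_sq θ
  simp_rw [hpt]
  rw [intervalIntegral.integral_const_mul, integral_exp_mul_cos_two_mul]
  ring

lemma setLIntegral_Ioo_ofReal_eq_ofReal_intervalIntegral {f : ℝ → ℝ} {a b : ℝ} (hab : a ≤ b)
    (hf : Continuous f) (hf₀ : 0 ≤ f) :
    ∫⁻ x in Ioo a b, ENNReal.ofReal (f x) = ENNReal.ofReal (∫ x in a..b, f x) := by
  rw [intervalIntegral.integral_of_le hab, setLIntegral_congr Ioo_ae_eq_Ioc,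
    ofReal_integral_eq_lintegral_ofReal hf.integrableOn_Ioc (ae_of_all _ hf₀)]

lemma lintegral_Ioi_ofReal_two_mul_mul_comp_sq (h : ℝ → ℝ≥0∞) :
    ∫⁻ r in Ioi 0, ENNReal.ofReal (2 * r) * h (r ^ 2) = ∫⁻ s in Ioi 0, h s := by
  have himage : (fun r : ℝ => r ^ 2) '' Ioi 0 = Ioi 0 := by
    ext s
    refine ⟨?_, fun hs => ⟨√s, sqrt_pos.2 hs, sq_sqrt (le_of_lt hs)⟩⟩
    rintro ⟨r, hr, rfl⟩
    exact pow_pos (mem_Ioi.1 hr) 2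
  conv_rhs => rw [← himage, lintegral_image_eq_lintegral_abs_deriv_mul measurableSet_Ioi
    (fun r _ => by simpa using (hasDerivAt_pow 2 r).hasDerivWithinAt)
    ((pow_left_strictMonoOn₀ two_ne_zero).injOn.mono Ioi_subset_Ici_self)]
  refine setLIntegral_congr_fun measurableSet_Ioi fun r hr => ?_
  rw [abs_of_pos (by simpa using hr)]

lemma lintegral_mul_comp_sq_add_sq {g : ℝ × ℝ → ℝ≥0∞} (hg : Measurable g) {F : ℝ → ℝ≥0∞}
    (hF : Measurable F) :
    ∫⁻ p, g p * F (p.1 ^ 2 + p.2 ^ 2) = ∫⁻ r in Ioi 0,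
      ENNReal.ofReal r * (∫⁻ θ in Ioo (-π) π, g (r * cos θ, r * sin θ)) * F (r ^ 2) := by
  have hnorm (r θ : ℝ) : (r * cos θ) ^ 2 + (r * sin θ) ^ 2 = r ^ 2 := by
    linear_combination r ^ 2 * cos_sq_add_sin_sq θ
  rw [← lintegral_comp_polarCoord_symm, show polarCoord.target = Ioi 0 ×ˢ Ioo (-π) π from rfl,
    Measure.volume_eq_prod, ← Measure.prod_restrict, lintegral_prod _ (by fun_prop)]
  refine setLIntegral_congr_fun measurableSet_Ioi fun r _ => ?_
  simp only [polarCoord_symm_apply, hnorm, smul_eq_mul]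
  rw [mul_assoc, ← lintegral_mul_const _ (by fun_prop), ← lintegral_const_mul _ (by fun_prop)]

lemma gaussianPDFReal_zero_of_var_eq_sq {v : ℝ≥0} {σ : ℝ} (hσ : 0 < σ) (hv : (v : ℝ) = σ ^ 2)
    (x : ℝ) : gaussianPDFReal 0 v x = (√(2 * π) * σ)⁻¹ * rexp (-x ^ 2 / (2 * σ ^ 2)) := by
  rw [gaussianPDFReal, hv, sqrt_mul (by positivity), sqrt_sq hσ.le, sub_zero]

lemma continuous_gaussianPDFReal (μ : ℝ) (v : ℝ≥0) : Continuous (gaussianPDFReal μ v) := by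
  rw [gaussianPDFReal_def]
  fun_prop

noncomputable def squaredHoytPDFReal (σ₁ σ₂ s : ℝ) : ℝ :=
  (1 / (2 * σ₁ * σ₂)) * rexp (-(s * (σ₁ ^ 2 + σ₂ ^ 2)) / (4 * σ₁ ^ 2 * σ₂ ^ 2)) *
    besselI0 (s * (σ₁ ^ 2 - σ₂ ^ 2) / (4 * σ₁ ^ 2 * σ₂ ^ 2))

section SquaredHoyt

variable {σ₁ σ₂ : ℝ} {v₁ v₂ : ℝ≥0}

lemma measurable_squaredHoytPDFReal : Measurable (squaredHoytPDFReal σ₁ σ₂) := by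
  unfold squaredHoytPDFReal
  have := continuous_besselI0
  fun_prop

lemma integral_gaussianPDFReal_mul_gaussianPDFReal_polar (hσ₁ : 0 < σ₁) (hσ₂ : 0 < σ₂)
    (hv₁ : (v₁ : ℝ) = σ₁ ^ 2) (hv₂ : (v₂ : ℝ) = σ₂ ^ 2) (r : ℝ) :
    ∫ θ in (-π)..π, gaussianPDFReal 0 v₁ (r * cos θ) * gaussianPDFReal 0 v₂ (r * sin θ) =
      2 * squaredHoytPDFReal σ₁ σ₂ (r ^ 2) := by
  have hpt (θ : ℝ) : gaussianPDFReal 0 v₁ (r * cos θ) * gaussianPDFReal 0 v₂ (r * sin θ) =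
      ((√(2 * π) * σ₁)⁻¹ * (√(2 * π) * σ₂)⁻¹) *
        rexp (-r ^ 2 / (2 * σ₁ ^ 2) * cos θ ^ 2 + -r ^ 2 / (2 * σ₂ ^ 2) * sin θ ^ 2) := by
    rw [gaussianPDFReal_zero_of_var_eq_sq hσ₁ hv₁, gaussianPDFReal_zero_of_var_eq_sq hσ₂ hv₂,
      mul_mul_mul_comm, ← exp_add]
    ring_nf
  simp_rw [hpt]
  rw [intervalIntegral.integral_const_mul, integral_exp_mul_cos_sq_add_mul_sin_sq,
    squaredHoytPDFReal]
  have hsqrt : √(2 * π) ^ 2 = 2 * π := sq_sqrt (by positivity)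
  field_simp
  rw [hsqrt]
  ring_nf

theorem map_sq_add_sq_gaussianReal_prod (hσ₁ : 0 < σ₁) (hσ₂ : 0 < σ₂)
    (hv₁ : (v₁ : ℝ) = σ₁ ^ 2) (hv₂ : (v₂ : ℝ) = σ₂ ^ 2) :
    ((gaussianReal 0 v₁).prod (gaussianReal 0 v₂)).map (fun p : ℝ × ℝ => p.1 ^ 2 + p.2 ^ 2) =
      (volume.restrict (Ioi 0)).withDensity
        fun s => ENNReal.ofReal (squaredHoytPDFReal σ₁ σ₂ s) := by
  have hv₁_ne : v₁ ≠ 0 := by rw [← NNReal.coe_ne_zero, hv₁]; positivity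
  have hv₂_ne : v₂ ≠ 0 := by rw [← NNReal.coe_ne_zero, hv₂]; positivity
  refine Measure.ext_of_lintegral _ fun F hF => ?_
  rw [lintegral_map hF (by fun_prop),
    lintegral_withDensity_eq_lintegral_mul _ measurable_squaredHoytPDFReal.ennreal_ofReal hF,
    gaussianReal_of_var_ne_zero _ hv₁_ne, gaussianReal_of_var_ne_zero _ hv₂_ne,
    prod_withDensity (measurable_gaussianPDF _ _) (measurable_gaussianPDF _ _),
    ← Measure.volume_eq_prod, lintegral_withDensity_eq_lintegral_mul _ (by fun_prop) (by fun_prop)]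
  simp only [Pi.mul_apply]
  rw [lintegral_mul_comp_sq_add_sq (by fun_prop) hF]
  conv_rhs => rw [← lintegral_Ioi_ofReal_two_mul_mul_comp_sq]
  refine setLIntegral_congr_fun measurableSet_Ioi fun r _ => ?_
  have hangular : ∫⁻ θ in Ioo (-π) π, gaussianPDF 0 v₁ (r * cos θ) * gaussianPDF 0 v₂ (r * sin θ) =
        ENNReal.ofReal (2 * squaredHoytPDFReal σ₁ σ₂ (r ^ 2)) := by
    simp only [gaussianPDF, ← ENNReal.ofReal_mul (gaussianPDFReal_nonneg _ _ _)]
    rw [setLIntegral_Ioo_ofReal_eq_ofReal_intervalIntegral (by linarith [pi_pos]) ?_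
      (fun θ => mul_nonneg (gaussianPDFReal_nonneg _ _ _) (gaussianPDFReal_nonneg _ _ _)),
      integral_gaussianPDFReal_mul_gaussianPDFReal_polar hσ₁ hσ₂ hv₁ hv₂]
    exact ((continuous_gaussianPDFReal 0 v₁).comp (by fun_prop)).mul
      ((continuous_gaussianPDFReal 0 v₂).comp (by fun_prop))
  rw [hangular, ENNReal.ofReal_mul zero_le_two, ENNReal.ofReal_mul zero_le_two]
  ring

end SquaredHoyt

theorem squared_hoyt_density
    (σ₁ σ₂ : ℝ) (hσ₁ : 0 < σ₁) (hσ₂ : 0 < σ₂)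
    (μ₁ μ₂ : Measure ℝ)
    (hμ₁ : μ₁ = gaussianReal 0 ⟨σ₁ ^ 2, sq_nonneg σ₁⟩)
    (hμ₂ : μ₂ = gaussianReal 0 ⟨σ₂ ^ 2, sq_nonneg σ₂⟩)
    (fR : ℝ → ℝ)
    (hfR : ∀ r : ℝ, fR r =
      if 0 < r then
        (1 / (2 * σ₁ * σ₂)) * Real.exp (-(r * (σ₁ ^ 2 + σ₂ ^ 2)) / (4 * σ₁ ^ 2 * σ₂ ^ 2)) *
          besselI0 (r * (σ₁ ^ 2 - σ₂ ^ 2) / (4 * σ₁ ^ 2 * σ₂ ^ 2))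
      else 0) :
    Measure.map (fun p : ℝ × ℝ => p.1 ^ 2 + p.2 ^ 2) (μ₁.prod μ₂) =
      volume.withDensity (fun r => ENNReal.ofReal (fR r)) := by
  subst hμ₁ hμ₂
  have hdensity : (fun r => ENNReal.ofReal (fR r)) =
      (Ioi 0).indicator fun r => ENNReal.ofReal (squaredHoytPDFReal σ₁ σ₂ r) := by
    ext r
    by_cases hr : 0 < r <;> simp [hfR, hr, squaredHoytPDFReal]
  rw [hdensity, withDensity_indicator measurableSet_Ioi]
  exact map_sq_add_sq_gaussianReal_prod hσ₁ hσ₂ rfl rfl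
end

section
/- For every a ∈ ℝ and every r > 0, ∫_0^r cosh(a·√x)·cosh(a·√(r − x)) / √(x·(r − x)) dx = ∫_0^π exp(a·√(2r)·cos θ) dθ. -/
open MeasureTheory Real Set

theorem cosh_convolution_bessel
    (a r : ℝ) (hr : 0 < r) :
    ∫ x in Set.Ioo 0 r,
        Real.cosh (a * Real.sqrt x) * Real.cosh (a * Real.sqrt (r - x)) /
          Real.sqrt (x * (r - x)) =
      ∫ θ in (0:ℝ)..π, Real.exp (a * Real.sqrt (2 * r) * Real.cos θ) := by
  have hπ := Real.pi_pos
  set b : ℝ := a * Real.sqrt r with hb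
  set c : ℝ := a * Real.sqrt (2 * r) with hc
  set g : ℝ → ℝ := fun x => Real.cosh (a * Real.sqrt x) * Real.cosh (a * Real.sqrt (r - x)) /
      Real.sqrt (x * (r - x)) with hg
  set φ : ℝ → ℝ := fun θ => r / 2 * (1 - Real.cos θ) with hφ
  set h : ℝ → ℝ := fun θ => Real.cosh (b * Real.sin (θ / 2)) * Real.cosh (b * Real.cos (θ / 2))
    with hh
  -- strict monotonicity of φ on [0, π]
  have hmono : StrictMonoOn φ (Set.Icc 0 π) := by
    intro x hx y hy hxy
    have hcos := Real.strictAntiOn_cos hx hy hxy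
    simp only [hφ]
    nlinarith
  have hinj : Set.InjOn φ (Set.Ioo 0 π) :=
    (hmono.mono Set.Ioo_subset_Icc_self).injOn
  -- image of (0, π) under φ is (0, r)
  have himg : φ '' Set.Ioo 0 π = Set.Ioo 0 r := by
    ext y
    constructor
    · rintro ⟨θ, hθ, rfl⟩
      have h1 : Real.cos θ < 1 := by
        have := hmono ⟨le_refl 0, hπ.le⟩ ⟨hθ.1.le, hθ.2.le⟩ hθ.1
        simp only [hφ, Real.cos_zero] at this
        nlinarith
      have h2 : -1 < Real.cos θ := by
        have := hmono ⟨hθ.1.le, hθ.2.le⟩ ⟨hπ.le, le_refl π⟩ hθ.2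
        simp only [hφ, Real.cos_pi] at this
        nlinarith
      constructor
      · simp only [hφ]; nlinarith
      · simp only [hφ]; nlinarith
    · rintro ⟨hy0, hyr⟩
      refine ⟨Real.arccos (1 - 2 * y / r), ⟨?_, ?_⟩, ?_⟩
      · exact Real.arccos_pos.2 (by rw [sub_lt_self_iff]; positivity)
      · refine lt_of_le_of_ne (Real.arccos_le_pi _) (fun he => ?_)
        have h1 := Real.arccos_eq_pi.mp he
        have h2 : y / r < 1 := (div_lt_one hr).2 hyr
        have h3 : 2 * y / r = 2 * (y / r) := by ring
        linarith
      · simp only [hφ]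
        have h2 : y / r < 1 := (div_lt_one hr).2 hyr
        have h3 : 2 * y / r = 2 * (y / r) := by ring
        rw [Real.cos_arccos (by linarith) (by rw [sub_le_self_iff]; positivity)]
        field_simp
        ring
  -- derivative of φ
  have hderiv : ∀ θ ∈ Set.Ioo 0 π,
      HasDerivWithinAt φ (r / 2 * Real.sin θ) (Set.Ioo 0 π) θ := by
    intro θ _
    have h1 : HasDerivAt (fun t : ℝ => r / 2 * (1 - Real.cos t)) (r / 2 * Real.sin θ) θ := by
      have := ((hasDerivAt_const θ (1:ℝ)).sub (Real.hasDerivAt_cos θ)).const_mul (r / 2)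
      simpa using this
    exact h1.hasDerivWithinAt
  -- Step A : change of variables
  have hA : ∫ x in Set.Ioo 0 r, g x = ∫ θ in Set.Ioo 0 π, h θ := by
    rw [← himg, MeasureTheory.integral_image_eq_integral_abs_deriv_smul measurableSet_Ioo
      hderiv hinj g]
    refine MeasureTheory.setIntegral_congr_fun measurableSet_Ioo (fun θ hθ => ?_)
    obtain ⟨hθ0, hθπ⟩ := hθ
    set s : ℝ := Real.sin (θ / 2) with hsdef
    set t : ℝ := Real.cos (θ / 2) with htdef
    have hs0 : 0 < s := Real.sin_pos_of_pos_of_lt_pi (by linarith) (by linarith)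
    have ht0 : 0 < t := Real.cos_pos_of_mem_Ioo ⟨by linarith, by linarith⟩
    have hcosθ : Real.cos θ = 2 * t ^ 2 - 1 := by
      have := Real.cos_two_mul (θ / 2)
      rwa [show 2 * (θ / 2) = θ by ring] at this
    have hsinθ : Real.sin θ = 2 * s * t := by
      have := Real.sin_two_mul (θ / 2)
      rwa [show 2 * (θ / 2) = θ by ring] at this
    have hst : s ^ 2 + t ^ 2 = 1 := Real.sin_sq_add_cos_sq (θ / 2)
    have hφθ : φ θ = r * s ^ 2 := by simp only [hφ]; rw [hcosθ]; nlinarith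
    have hrφ : r - φ θ = r * t ^ 2 := by simp only [hφ]; rw [hcosθ]; ring
    have hsq1 : Real.sqrt (φ θ) = Real.sqrt r * s := by
      rw [hφθ, Real.sqrt_mul hr.le, Real.sqrt_sq hs0.le]
    have hsq2 : Real.sqrt (r - φ θ) = Real.sqrt r * t := by
      rw [hrφ, Real.sqrt_mul hr.le, Real.sqrt_sq ht0.le]
    have hsq3 : Real.sqrt (φ θ * (r - φ θ)) = r * s * t := by
      rw [hrφ, hφθ, show r * s ^ 2 * (r * t ^ 2) = (r * s * t) ^ 2 by ring,
        Real.sqrt_sq (by positivity)]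
    have habs : |r / 2 * Real.sin θ| = r * s * t := by
      rw [hsinθ, abs_of_pos (by positivity)]
      ring
    have hne : r * s * t ≠ 0 := by positivity
    simp only [hg, smul_eq_mul, habs, hsq1, hsq2, hsq3, hh, hb]
    rw [mul_comm, div_mul_cancel₀ _ hne, mul_assoc a (Real.sqrt r) s,
      mul_assoc a (Real.sqrt r) t]
  -- pointwise product-to-sum identity
  have hc2 : c = Real.sqrt 2 * b := by
    rw [hc, hb, Real.sqrt_mul (by norm_num : (0:ℝ) ≤ 2)]
    ring
  have h2 : Real.sqrt 2 * Real.sqrt 2 = 2 := Real.mul_self_sqrt (by norm_num)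
  have key : ∀ u v : ℝ, Real.cosh u * Real.cosh v =
      (Real.cosh (u + v) + Real.cosh (u - v)) / 2 := by
    intro u v
    rw [Real.cosh_add, Real.cosh_sub]
    ring
  have hpt : ∀ θ : ℝ, h θ =
      (Real.cosh (c * Real.cos (θ / 2 - π / 4)) + Real.cosh (c * Real.cos (θ / 2 + π / 4))) / 2 := by
    intro θ
    have e1 : b * Real.sin (θ / 2) + b * Real.cos (θ / 2) = c * Real.cos (θ / 2 - π / 4) := by
      rw [Real.cos_sub, Real.cos_pi_div_four, Real.sin_pi_div_four, hc2]
      linear_combination (-(b * (Real.cos (θ / 2) + Real.sin (θ / 2)) / 2)) * h2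
    have e2 : b * Real.cos (θ / 2) - b * Real.sin (θ / 2) = c * Real.cos (θ / 2 + π / 4) := by
      rw [Real.cos_add, Real.cos_pi_div_four, Real.sin_pi_div_four, hc2]
      linear_combination (-(b * (Real.cos (θ / 2) - Real.sin (θ / 2)) / 2)) * h2
    calc h θ = (Real.cosh (b * Real.sin (θ / 2) + b * Real.cos (θ / 2)) +
          Real.cosh (b * Real.sin (θ / 2) - b * Real.cos (θ / 2))) / 2 := key _ _
      _ = _ := by
          rw [show b * Real.sin (θ / 2) - b * Real.cos (θ / 2) =
            -(b * Real.cos (θ / 2) - b * Real.sin (θ / 2)) by ring, Real.cosh_neg, e1, e2]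
  -- continuity facts
  have hfc : Continuous fun u : ℝ => Real.cosh (c * Real.cos u) :=
    Real.continuous_cosh.comp (continuous_const.mul Real.continuous_cos)
  have hec : Continuous fun u : ℝ => Real.exp (c * Real.cos u) :=
    Real.continuous_exp.comp (continuous_const.mul Real.continuous_cos)
  have henc : Continuous fun u : ℝ => Real.exp (-(c * Real.cos u)) :=
    Real.continuous_exp.comp (continuous_const.mul Real.continuous_cos).neg
  -- periodicity
  have hper : Function.Periodic (fun u : ℝ => Real.cosh (c * Real.cos u)) π := by
    intro u
    simp [Real.cos_add_pi, mul_neg, Real.cosh_neg]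
  -- I1 and I2
  have I1 : (∫ θ in (0:ℝ)..π, Real.cosh (c * Real.cos (θ / 2 - π / 4))) =
      2 * ∫ u in (-(π / 4))..(π / 4), Real.cosh (c * Real.cos u) := by
    have step := intervalIntegral.integral_comp_mul_add (a := 0) (b := π)
      (fun u => Real.cosh (c * Real.cos u)) (by norm_num : ((2:ℝ)⁻¹) ≠ 0) (-(π / 4))
    rw [intervalIntegral.integral_congr (g := fun θ =>
        Real.cosh (c * Real.cos ((2:ℝ)⁻¹ * θ + -(π / 4))))
      (fun θ _ => by norm_num [show θ / 2 - π / 4 = (2:ℝ)⁻¹ * θ + -(π / 4) by ring]), step]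
    rw [show (2:ℝ)⁻¹ * 0 + -(π / 4) = -(π / 4) by ring,
      show (2:ℝ)⁻¹ * π + -(π / 4) = π / 4 by ring]
    simp
  have I2 : (∫ θ in (0:ℝ)..π, Real.cosh (c * Real.cos (θ / 2 + π / 4))) =
      2 * ∫ u in (π / 4)..(3 * (π / 4)), Real.cosh (c * Real.cos u) := by
    have step := intervalIntegral.integral_comp_mul_add (a := 0) (b := π)
      (fun u => Real.cosh (c * Real.cos u)) (by norm_num : ((2:ℝ)⁻¹) ≠ 0) (π / 4)
    rw [intervalIntegral.integral_congr (g := fun θ =>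
        Real.cosh (c * Real.cos ((2:ℝ)⁻¹ * θ + π / 4)))
      (fun θ _ => by norm_num [show θ / 2 + π / 4 = (2:ℝ)⁻¹ * θ + π / 4 by ring]), step]
    rw [show (2:ℝ)⁻¹ * 0 + π / 4 = π / 4 by ring,
      show (2:ℝ)⁻¹ * π + π / 4 = 3 * (π / 4) by ring]
    simp
  -- adjacent intervals and periodicity
  have Iadd : (∫ u in (-(π / 4))..(π / 4), Real.cosh (c * Real.cos u)) +
      (∫ u in (π / 4)..(3 * (π / 4)), Real.cosh (c * Real.cos u)) =
      ∫ u in (-(π / 4))..(3 * (π / 4)), Real.cosh (c * Real.cos u) :=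
    intervalIntegral.integral_add_adjacent_intervals
      (hfc.intervalIntegrable _ _) (hfc.intervalIntegrable _ _)
  have Iper : (∫ u in (-(π / 4))..(3 * (π / 4)), Real.cosh (c * Real.cos u)) =
      ∫ u in (0:ℝ)..π, Real.cosh (c * Real.cos u) := by
    have := hper.intervalIntegral_add_eq (-(π / 4)) 0
    rwa [show -(π / 4) + π = 3 * (π / 4) by ring, zero_add] at this
  -- reflection for exp
  have hrefl : (∫ θ in (0:ℝ)..π, Real.exp (-(c * Real.cos θ))) =
      ∫ θ in (0:ℝ)..π, Real.exp (c * Real.cos θ) := by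
    have := intervalIntegral.integral_comp_sub_left (a := 0) (b := π)
      (fun u => Real.exp (c * Real.cos u)) π
    rw [sub_self, sub_zero] at this
    rw [← this]
    refine intervalIntegral.integral_congr (fun θ _ => ?_)
    rw [Real.cos_pi_sub, mul_neg]
  -- cosh to exp
  have hcoshexp : (∫ u in (0:ℝ)..π, Real.cosh (c * Real.cos u)) =
      ∫ θ in (0:ℝ)..π, Real.exp (c * Real.cos θ) := by
    rw [intervalIntegral.integral_congr (g := fun u =>
        (Real.exp (c * Real.cos u) + Real.exp (-(c * Real.cos u))) / 2)
      (fun u _ => Real.cosh_eq _), intervalIntegral.integral_div,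
      intervalIntegral.integral_add (hec.intervalIntegrable _ _)
        (henc.intervalIntegrable _ _), hrefl]
    ring
  -- Step B : interval integral of h
  have hB : (∫ θ in (0:ℝ)..π, h θ) = ∫ θ in (0:ℝ)..π, Real.exp (c * Real.cos θ) := by
    have hc1 : Continuous fun θ : ℝ => Real.cosh (c * Real.cos (θ / 2 - π / 4)) :=
      hfc.comp ((continuous_id.div_const 2).sub continuous_const)
    have hc2' : Continuous fun θ : ℝ => Real.cosh (c * Real.cos (θ / 2 + π / 4)) :=
      hfc.comp ((continuous_id.div_const 2).add continuous_const)
    rw [intervalIntegral.integral_congr (fun θ _ => hpt θ), intervalIntegral.integral_div,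
      intervalIntegral.integral_add (hc1.intervalIntegrable _ _) (hc2'.intervalIntegrable _ _),
      I1, I2, ← hcoshexp]
    rw [show (2 * ∫ u in (-(π / 4))..(π / 4), Real.cosh (c * Real.cos u)) +
        2 * ∫ u in (π / 4)..(3 * (π / 4)), Real.cosh (c * Real.cos u) =
        2 * ((∫ u in (-(π / 4))..(π / 4), Real.cosh (c * Real.cos u)) +
        ∫ u in (π / 4)..(3 * (π / 4)), Real.cosh (c * Real.cos u)) by ring, Iadd, Iper]
    ring
  calc ∫ x in Set.Ioo 0 r, g x = ∫ θ in Set.Ioo 0 π, h θ := hA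
    _ = ∫ θ in (0:ℝ)..π, h θ := by
        rw [intervalIntegral.integral_of_le hπ.le, MeasureTheory.integral_Ioc_eq_integral_Ioo]
    _ = ∫ θ in (0:ℝ)..π, Real.exp (c * Real.cos θ) := hB
end

section
/- For every c ∈ ℝ and every r > 0, ∫_0^r √x·exp(c·x) / √(r − x) dx = (r/2)·exp(c·r/2)·( ∫_0^π exp((c·r/2)·cos θ) dθ + ∫_0^π exp((c·r/2)·cos θ)·cos θ dθ ). -/
/-!
Substitute `x = (r/2)(1 + cos θ)`, first affinely `x = (r/2)(1 + u)` onto `(-1, 1)` and then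
`u = cos θ`. The Jacobian `sin θ` cancels the singularity of the kernel, since
`sin θ · √(1 + cos θ) / √(1 - cos θ) = 1 + cos θ`, and `exp (c x)` splits as
`exp (c r / 2) · exp ((c r / 2) cos θ)`.
-/

open MeasureTheory Real Set

theorem integral_Ioo_eq_smul_integral_Ioo_neg_one_one {E : Type*} [NormedAddCommGroup E]
    [NormedSpace ℝ E] {a b : ℝ} (hab : a ≤ b) (f : ℝ → E) :
    ∫ x in Ioo a b, f x =
      ((b - a) / 2) • ∫ u in Ioo (-1) 1, f ((a + b) / 2 + (b - a) / 2 * u) := by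
  rw [← integral_Ioc_eq_integral_Ioo, ← integral_Ioc_eq_integral_Ioo,
    ← intervalIntegral.integral_of_le hab, ← intervalIntegral.integral_of_le (by norm_num),
    intervalIntegral.smul_integral_comp_add_mul]
  congr 1 <;> ring

theorem Real.image_cos_Ioo : cos '' Ioo 0 π = Ioo (-1) 1 :=
  cosPartialHomeomorph.image_source_eq_target

theorem integral_Ioo_neg_one_one_eq_integral_sin_smul_comp_cos {E : Type*}
    [NormedAddCommGroup E] [NormedSpace ℝ E] (f : ℝ → E) :
    ∫ u in Ioo (-1) 1, f u = ∫ θ in Ioo 0 π, sin θ • f (cos θ) := by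
  rw [← Real.image_cos_Ioo, integral_image_eq_integral_abs_deriv_smul measurableSet_Ioo
    (fun θ _ ↦ (hasDerivAt_cos θ).hasDerivWithinAt) (injOn_cos.mono Ioo_subset_Icc_self)]
  refine setIntegral_congr_fun measurableSet_Ioo fun θ ⟨h0, hπ⟩ ↦ ?_
  rw [abs_neg, abs_of_pos (sin_pos_of_pos_of_lt_pi h0 hπ)]

theorem Real.sin_mul_sqrt_one_add_cos_div_sqrt_one_sub_cos {θ : ℝ} (h0 : 0 < θ) (hπ : θ ≤ π) :
    sin θ * √(1 + cos θ) / √(1 - cos θ) = 1 + cos θ := by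
  have hcos : cos θ < 1 := by simpa using cos_lt_cos_of_nonneg_of_le_pi le_rfl hπ h0
  have hsin : sin θ = √(1 - cos θ) * √(1 + cos θ) := by
    rw [sin_eq_sqrt_one_sub_cos_sq h0.le hπ, ← sqrt_mul (by linarith)]
    ring_nf
  have hpos : 0 < √(1 - cos θ) := sqrt_pos.2 (by linarith)
  rw [hsin, mul_assoc, mul_div_cancel_left₀ _ hpos.ne',
    mul_self_sqrt (by linarith [neg_one_le_cos θ])]

theorem sqrt_exp_convolution_bessel
    (c r : ℝ) (hr : 0 < r) :
    ∫ x in Set.Ioo 0 r, Real.sqrt x * Real.exp (c * x) / Real.sqrt (r - x) =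
      (r / 2) * Real.exp (c * r / 2) *
        ((∫ θ in (0:ℝ)..π, Real.exp ((c * r / 2) * Real.cos θ)) +
          ∫ θ in (0:ℝ)..π, Real.exp ((c * r / 2) * Real.cos θ) * Real.cos θ) := by
  have hm : 0 < r / 2 := half_pos hr
  have hint (g : ℝ → ℝ) (hg : Continuous g) : IntegrableOn g (Ioo 0 π) :=
    hg.integrableOn_Icc.mono_set Ioo_subset_Icc_self
  rw [integral_Ioo_eq_smul_integral_Ioo_neg_one_one hr.le,
    integral_Ioo_neg_one_one_eq_integral_sin_smul_comp_cos, zero_add, sub_zero, smul_eq_mul,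
    intervalIntegral.integral_of_le pi_pos.le, intervalIntegral.integral_of_le pi_pos.le,
    integral_Ioc_eq_integral_Ioo, integral_Ioc_eq_integral_Ioo,
    ← integral_add (hint _ (by fun_prop)) (hint _ (by fun_prop)), mul_assoc,
    ← integral_const_mul (exp (c * r / 2))]
  refine congrArg _ (setIntegral_congr_fun measurableSet_Ioo fun θ ⟨h0, hπ⟩ ↦ ?_)
  set x := r / 2 + r / 2 * cos θ
  have hsqrt : √x / √(r - x) = √(1 + cos θ) / √(1 - cos θ) := by
    rw [show x = r / 2 * (1 + cos θ) by ring,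
      show r - r / 2 * (1 + cos θ) = r / 2 * (1 - cos θ) by ring,
      sqrt_mul hm.le, sqrt_mul hm.le, mul_div_mul_left _ _ (sqrt_pos.2 hm).ne']
  calc sin θ • (√x * exp (c * x) / √(r - x))
      = exp (c * x) * (sin θ * √(1 + cos θ) / √(1 - cos θ)) := by
        rw [smul_eq_mul, mul_div_assoc (sin θ), ← hsqrt]; ring
    _ = exp (c * r / 2) * (exp (c * r / 2 * cos θ) + exp (c * r / 2 * cos θ) * cos θ) := by
        rw [sin_mul_sqrt_one_add_cos_div_sqrt_one_sub_cos h0 hπ.le,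
          show c * x = c * r / 2 + c * r / 2 * cos θ by ring, exp_add]
        ring
end
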